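/- Let E be a finite set with a symmetric crossing-multiplicity function x : E × E → ℕ (x(e,e)=0, x symmetric) and c(e) = Σ_f x(e,f). If the drawing is min-k-planar (x(e,f) ≥ 1 implies min(c(e),c(f)) ≤ k), then the total number of crossings Σ_{e<f} x(e,f) is at most k·|E|. -/
import Mathlib


theorem stmt_14 {E : Type*} [Fintype E] [LinearOrder E] (k : ℕ)
    (x : E → E → ℕ) (hsymm : ∀ e f, x e f = x f e) (hirr : ∀ e, x e e = 0)
    (hmin : ∀ e f, 1 ≤ x e f → min (∑ g, x e g) (∑ g, x f g) ≤ k) :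
    ∑ p ∈ Finset.univ.filter (fun p : E × E => p.1 < p.2), x p.1 p.2
      ≤ k * Fintype.card E := by
  classical
  set S := Finset.univ.filter (fun p : E × E => p.1 < p.2) with hS
  set φ : E × E → E := fun p => if (∑ g, x p.1 g) ≤ k then p.1 else p.2 with hφ
  have hmaps : ∀ p ∈ S, φ p ∈ (Finset.univ : Finset E) := fun _ _ => Finset.mem_univ _
  rw [← Finset.sum_fiberwise_of_maps_to hmaps (fun p => x p.1 p.2)]
  have key : ∀ g : E, ∑ p ∈ S.filter (fun p => φ p = g), x p.1 p.2 ≤ k := by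
    intro g
    set T := S.filter (fun p => φ p = g) with hT
    have hmem : ∀ p ∈ T, (p.1 = g ∧ g < p.2) ∨ (p.2 = g ∧ p.1 < g) := by
      intro p hp
      simp only [hT, hS, Finset.mem_filter, Finset.mem_univ, true_and] at hp
      obtain ⟨hlt, hφp⟩ := hp
      by_cases h : (∑ g, x p.1 g) ≤ k
      · left
        simp only [hφ, if_pos h] at hφp
        exact ⟨hφp, hφp ▸ hlt⟩
      · right
        simp only [hφ, if_neg h] at hφp
        exact ⟨hφp, hφp ▸ hlt⟩
    by_cases hx : ∃ p ∈ T, 1 ≤ x p.1 p.2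
    · obtain ⟨p, hpT, hp1⟩ := hx
      have hg : (∑ f, x g f) ≤ k := by
        have hp' := hpT
        simp only [hT, Finset.mem_filter] at hp'
        obtain ⟨-, hφp⟩ := hp'
        by_cases h : (∑ g, x p.1 g) ≤ k
        · simp only [hφ, if_pos h] at hφp
          exact hφp ▸ h
        · simp only [hφ, if_neg h] at hφp
          have hmm := hmin p.1 p.2 hp1
          rcases min_le_iff.mp hmm with h1 | h2
          · exact absurd h1 h
          · exact hφp ▸ h2
      set ψ : E × E → E := fun p => if p.1 = g then p.2 else p.1 with hψ
      have hinj : ∀ a ∈ T, ∀ b ∈ T, ψ a = ψ b → a = b := by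
        intro a ha b hb hab
        rcases hmem a ha with ⟨ha1, ha2⟩ | ⟨ha1, ha2⟩ <;>
          rcases hmem b hb with ⟨hb1, hb2⟩ | ⟨hb1, hb2⟩
        · simp only [hψ, if_pos ha1, if_pos hb1] at hab
          exact Prod.ext (ha1.trans hb1.symm) hab
        · simp only [hψ, if_pos ha1, if_neg (ne_of_lt hb2)] at hab
          exact absurd hb2 (not_lt.mpr (le_of_lt (hab ▸ ha2)))
        · simp only [hψ, if_neg (ne_of_lt ha2), if_pos hb1] at hab
          exact absurd ha2 (not_lt.mpr (le_of_lt (hab ▸ hb2)))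
        · simp only [hψ, if_neg (ne_of_lt ha2), if_neg (ne_of_lt hb2)] at hab
          exact Prod.ext hab (ha1.trans hb1.symm)
      calc ∑ p ∈ T, x p.1 p.2 = ∑ p ∈ T, x g (ψ p) := by
            refine Finset.sum_congr rfl fun p hp => ?_
            rcases hmem p hp with ⟨h1, _⟩ | ⟨h1, h2⟩
            · simp only [hψ, if_pos h1, h1]
            · simp only [hψ, if_neg (ne_of_lt h2)]
              rw [← h1, hsymm]
        _ = ∑ f ∈ T.image ψ, x g f := (Finset.sum_image hinj).symm
        _ ≤ ∑ f, x g f := Finset.sum_le_sum_of_subset (Finset.subset_univ _)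
        _ ≤ k := hg
    · push_neg at hx
      have : ∀ p ∈ T, x p.1 p.2 = 0 := fun p hp => Nat.lt_one_iff.mp (hx p hp)
      rw [Finset.sum_congr rfl this]
      simp
  calc ∑ g : E, ∑ p ∈ S.filter (fun p => φ p = g), x p.1 p.2
      ≤ ∑ _g : E, k := Finset.sum_le_sum fun g _ => key g
    _ = k * Fintype.card E := by simp [mul_comm]
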